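/- arXiv:2203.15492 — 2 statements merged into one kernel-verified Lean document; each statement's English description precedes it below -/
import Mathlib

section
/- Let m ≥ 0 be an integer, π_m = (2m+1)π, and μ ∈ (0,1) with ξ = √(1-μ). Then ∫₀^{π_m} μ·t·cos(t)·sin(ξt) dt = (μ·π_m/2)·U(π_m) - ((2-μ)/μ)·sin(ξ·π_m), where U(π_m) = -(2√(1-μ)/μ)·cos(√(1-μ)·π_m). -/
open Real

set_option maxHeartbeats 1000000

lemma aux_deriv (c : ℝ) (hc : c ≠ 0) (t : ℝ) :
    HasDerivAt (fun t => Real.sin (c*t)/c^2 - t*Real.cos (c*t)/c)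
      (t * Real.sin (c*t)) t := by
  have h1 : HasDerivAt (fun t : ℝ => c*t) c t := by
    simpa using (hasDerivAt_id t).const_mul c
  have hs : HasDerivAt (fun t => Real.sin (c*t)) (Real.cos (c*t) * c) t :=
    (Real.hasDerivAt_sin (c*t)).comp t h1
  have hcc : HasDerivAt (fun t => Real.cos (c*t)) (-Real.sin (c*t) * c) t :=
    (Real.hasDerivAt_cos (c*t)).comp t h1
  have h := (hs.div_const (c^2)).sub (((hasDerivAt_id t).mul hcc).div_const c)
  refine h.congr_deriv ?_
  simp only [id]
  field_simp
  ring

theorem stmt_7 (m : ℕ) (μ : ℝ) (hμ : μ ∈ Set.Ioo (0:ℝ) 1) :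
    ∫ t in (0:ℝ)..((2*(m:ℝ)+1)*π),
      μ * t * Real.cos t * Real.sin (Real.sqrt (1-μ) * t)
    = (μ * ((2*(m:ℝ)+1)*π) / 2) *
        (-(2 * Real.sqrt (1-μ) / μ) * Real.cos (Real.sqrt (1-μ) * ((2*(m:ℝ)+1)*π)))
      - ((2 - μ)/μ) * Real.sin (Real.sqrt (1-μ) * ((2*(m:ℝ)+1)*π)) := by
  obtain ⟨hμ0, hμ1⟩ := hμ
  set ξ := Real.sqrt (1-μ) with hξdef
  have h1μ : (0:ℝ) < 1 - μ := by linarith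
  have hξ2 : ξ^2 = 1 - μ := Real.sq_sqrt h1μ.le
  have hξ0 : 0 < ξ := Real.sqrt_pos.mpr h1μ
  have hξ1 : ξ < 1 := by
    nlinarith [hξ2, hξ0]
  have ha : (1+ξ) ≠ 0 := by positivity
  have hb : (1-ξ) ≠ 0 := by linarith
  have hμne : μ ≠ 0 := ne_of_gt hμ0
  set P : ℝ := (2*(m:ℝ)+1)*π with hP
  -- antiderivative
  set F : ℝ → ℝ := fun t => μ/2 *
      ((Real.sin ((1+ξ)*t)/(1+ξ)^2 - t*Real.cos ((1+ξ)*t)/(1+ξ))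
        - (Real.sin ((1-ξ)*t)/(1-ξ)^2 - t*Real.cos ((1-ξ)*t)/(1-ξ))) with hF
  have hderiv : ∀ t ∈ Set.uIcc (0:ℝ) P,
      HasDerivAt F (μ * t * Real.cos t * Real.sin (ξ * t)) t := by
    intro t _
    have h := ((aux_deriv (1+ξ) ha t).sub (aux_deriv (1-ξ) hb t)).const_mul (μ/2)
    refine h.congr_deriv ?_
    have e1 : (1+ξ)*t = t + ξ*t := by ring
    have e2 : (1-ξ)*t = t - ξ*t := by ring
    rw [e1, e2, Real.sin_add, Real.sin_sub]
    ring
  have hint : IntervalIntegrable (fun t => μ * t * Real.cos t * Real.sin (ξ * t))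
      MeasureTheory.volume 0 P := by
    exact (((continuous_const.mul continuous_id).mul Real.continuous_cos).mul
      (Real.continuous_sin.comp (continuous_const.mul continuous_id))).intervalIntegrable _ _
  rw [intervalIntegral.integral_eq_sub_of_hasDerivAt hderiv hint]
  have hF0 : F 0 = 0 := by simp [hF]
  rw [hF0, sub_zero]
  simp only [hF]
  have hsinP : Real.sin P = 0 := by
    rw [hP]
    have : (2*(m:ℝ)+1)*π = ((2*(m:ℤ)+1) : ℤ) * π := by push_cast; ring
    rw [this, Real.sin_int_mul_pi]
  have hcosP : Real.cos P = -1 := by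
    rw [hP]
    have : (2*(m:ℝ)+1)*π = (m:ℝ) * (2*π) + π := by ring
    rw [this, Real.cos_add, Real.cos_nat_mul_two_pi]
    simp
  have e1 : (1+ξ)*P = P + ξ*P := by ring
  have e2 : (1-ξ)*P = P - ξ*P := by ring
  rw [e1, e2, Real.sin_add, Real.sin_sub, Real.cos_add, Real.cos_sub,
    hsinP, hcosP]
  have hμeq : μ = 1 - ξ^2 := by linarith [hξ2]
  rw [hμeq]
  have hμne' : 1 - ξ^2 ≠ 0 := by rw [← hμeq]; exact hμne
  field_simp
  ring
end

section
/- Let m ≥ 0 be an integer, π_m = (2m+1)π, μ ∈ (0,1), ξ = √(1-μ) and B ∈ ℝ. If w(t) = B·sin(ξt) satisfies ∫_{-π_m}^{π_m} (μ·t·cos(t) + 2·sin(t))·w(t) dt - 2·B·sin(ξ·π_m) = 0 and B ≠ 0, then cos(ξ·π_m) = 0, i.e., ξ·(2m+1) = 1/2 + ℓ for some non-negative integer ℓ. -/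
open Real

theorem stmt_13 (m : ℕ) (μ : ℝ) (hμ : μ ∈ Set.Ioo (0:ℝ) 1) (B : ℝ) (hB : B ≠ 0)
    (h : (∫ t in (-((2*(m:ℝ)+1)*π))..((2*(m:ℝ)+1)*π),
          (μ * t * Real.cos t + 2 * Real.sin t) * (B * Real.sin (Real.sqrt (1-μ) * t)))
        - 2 * B * Real.sin (Real.sqrt (1-μ) * ((2*(m:ℝ)+1)*π)) = 0) :
    Real.cos (Real.sqrt (1-μ) * ((2*(m:ℝ)+1)*π)) = 0 ∧
    ∃ ℓ : ℕ, Real.sqrt (1-μ) * (2*(m:ℝ)+1) = 1/2 + ℓ := by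
  obtain ⟨hμ0, hμ1⟩ := hμ
  set ξ : ℝ := Real.sqrt (1-μ) with hξdef
  have hξ2 : ξ * ξ = 1 - μ := Real.mul_self_sqrt (by linarith)
  have hξpos : 0 < ξ := Real.sqrt_pos.mpr (by linarith)
  set P : ℝ := (2*(m:ℝ)+1)*π with hPdef
  have hπ : 0 < P := by
    have := Real.pi_pos
    have h1 : (0:ℝ) < 2*(m:ℝ)+1 := by positivity
    positivity
  set F : ℝ → ℝ := fun t => B * (t * Real.sin t * Real.sin (ξ*t) +
      ξ * (t * Real.cos t * Real.cos (ξ*t)) - Real.cos t * Real.sin (ξ*t)) with hFdef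
  have hderiv : ∀ t, HasDerivAt F
      ((μ * t * Real.cos t + 2 * Real.sin t) * (B * Real.sin (ξ * t))) t := by
    intro t
    have hs : HasDerivAt Real.sin (Real.cos t) t := Real.hasDerivAt_sin t
    have hc : HasDerivAt Real.cos (-Real.sin t) t := Real.hasDerivAt_cos t
    have hsx : HasDerivAt (fun t => Real.sin (ξ*t)) (Real.cos (ξ*t) * ξ) t := by
      simpa [Function.comp_def] using (Real.hasDerivAt_sin (ξ*t)).comp t ((hasDerivAt_id t).const_mul ξ)
    have hcx : HasDerivAt (fun t => Real.cos (ξ*t)) (-Real.sin (ξ*t) * ξ) t := by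
      simpa [Function.comp_def] using (Real.hasDerivAt_cos (ξ*t)).comp t ((hasDerivAt_id t).const_mul ξ)
    have h1 := ((hasDerivAt_id t).mul hs).mul hsx
    have h2 := (((hasDerivAt_id t).mul hc).mul hcx).const_mul ξ
    have h3 := hc.mul hsx
    have htot := ((h1.add h2).sub h3).const_mul B
    refine htot.congr_deriv ?_
    simp only [Pi.mul_apply, id_eq, one_mul]
    linear_combination (-(B * t * Real.cos t * Real.sin (ξ*t))) * hξ2
  have hcont : Continuous (fun t => (μ * t * Real.cos t + 2 * Real.sin t) * (B * Real.sin (ξ * t))) := by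
    fun_prop
  have hint : (∫ t in (-P)..P,
      (μ * t * Real.cos t + 2 * Real.sin t) * (B * Real.sin (ξ * t))) = F P - F (-P) :=
    intervalIntegral.integral_eq_sub_of_hasDerivAt (fun t _ => hderiv t)
      (hcont.intervalIntegrable _ _)
  have hsinP : Real.sin P = 0 := by
    rw [hPdef, show (2*(m:ℝ)+1) = ((2*(m:ℤ)+1 : ℤ) : ℝ) by push_cast; ring]
    exact Real.sin_int_mul_pi _
  have hcosP : Real.cos P = -1 := by
    rw [hPdef, show (2*(m:ℝ)+1)*π = (m:ℝ)*(2*π)+π by ring]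
    exact Real.cos_nat_mul_two_pi_add_pi m
  have eF1 : F P = B * (Real.sin (ξ*P) - ξ*P*Real.cos (ξ*P)) := by
    simp only [hFdef, hsinP, hcosP]; ring
  have eF2 : F (-P) = B * (ξ*P*Real.cos (ξ*P) - Real.sin (ξ*P)) := by
    simp only [hFdef, mul_neg, Real.sin_neg, Real.cos_neg, hsinP, hcosP]; ring
  rw [hint, eF1, eF2] at h
  have hc0 : Real.cos (ξ * P) = 0 := by
    have hprod : (2 * B * (ξ * P)) * Real.cos (ξ * P) = 0 := by linarith
    have hne : (2 * B * (ξ * P)) ≠ 0 := by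
      have : ξ * P > 0 := by positivity
      intro hcontra
      rcases mul_eq_zero.mp hcontra with h' | h'
      · rcases mul_eq_zero.mp h' with h'' | h''
        · norm_num at h''
        · exact hB h''
      · linarith
    exact (mul_eq_zero.mp hprod).resolve_left hne
  refine ⟨hc0, ?_⟩
  obtain ⟨k, hk⟩ := Real.cos_eq_zero_iff.mp hc0
  have hπpos := Real.pi_pos
  have hk' : ξ * (2*(m:ℝ)+1) = (k:ℝ) + 1/2 := by
    have h' : ξ * (2*(m:ℝ)+1) * π = ((k:ℝ) + 1/2) * π := by
      rw [hPdef] at hk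
      linear_combination hk
    exact mul_right_cancel₀ (ne_of_gt hπpos) h'
  have hkpos : 0 ≤ k := by
    by_contra hneg
    push_neg at hneg
    have : (k:ℝ) ≤ -1 := by exact_mod_cast Int.le_of_lt_add_one (by simpa using hneg)
    have hL : 0 < ξ * (2*(m:ℝ)+1) := by positivity
    linarith
  refine ⟨k.toNat, ?_⟩
  rw [hk']
  have hcast : ((k.toNat : ℝ)) = (k:ℝ) := by exact_mod_cast Int.toNat_of_nonneg hkpos
  rw [hcast]
  ring
end
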